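/- In the setting of the previous statement (2-representation ρ and data (ω, α, φ̃) satisfying the cocycle equations), the map L^ε_{(y,v)}(x,w) := (L_y x, ρ₀¹(y)w − ρ₁(x)v − α(y;x)) defines a Lie algebra action of 𝔥 ⊕^ω V on 𝔤 ⊕^{ω₁} W, i.e. L^ε_{[(y₀,v₀),(y₁,v₁)]} = L^ε_{(y₀,v₀)} ∘ L^ε_{(y₁,v₁)} − L^ε_{(y₁,v₁)} ∘ L^ε_{(y₀,v₀)}, provided equation (v) holds: α([y₀,y₁];x) − ρ₁(x)ω(y₀,y₁) = ρ₀¹(y₀)α(y₁;x) − α(y₁; L_{y₀}x) − ρ₀¹(y₁)α(y₀;x) + α(y₀; L_{y₁}x). -/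

import Mathlib

attribute [local instance 100] LieRing.ofAssociativeRing

/-- The action L^ε_{(y,v)}(x,w) := (L_y x, ρ₀¹(y)w − ρ₁(x)v − α(y;x)). -/
def Leps
    (K : Type*) [Field K]
    (g h W V : Type*) [LieRing g] [LieAlgebra K g] [LieRing h] [LieAlgebra K h]
    [AddCommGroup W] [Module K W] [AddCommGroup V] [Module K V]
    (L : h →ₗ⁅K⁆ Module.End K g)
    (ρ01 : h →ₗ⁅K⁆ Module.End K W) (ρ1 : g →ₗ[K] V →ₗ[K] W)
    (α : h →ₗ[K] g →ₗ[K] W) (y : h) (v : V) (p : g × W) : g × W :=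
  (L y p.1, ρ01 y p.2 - ρ1 p.1 v - α y p.1)

/-!
The commutator of `L^ε_{(y₀,v₀)}` and `L^ε_{(y₁,v₁)}` is computed for an arbitrary `α`: it is
`L^ε` at `([y₀,y₁], ρ₀⁰(y₀)v₁ − ρ₀⁰(y₁)v₀)`, except that `α([y₀,y₁];x)` is replaced by the
Chevalley–Eilenberg coboundary `ρ₀¹(y₀)α(y₁;x) − α(y₁;L_{y₀}x) − ρ₀¹(y₁)α(y₀;x) + α(y₀;L_{y₁}x)`.
Here the identity `ρ₁(L_y x) = ρ₀¹(y)ρ₁(x) − ρ₁(x)ρ₀⁰(y)` cancels the cross terms in `v`.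
Equation (v) says that this coboundary differs from `α([y₀,y₁];x)` by exactly `ρ₁(x)ω(y₀,y₁)`,
which is the twist by `ω` in the bracket of `𝔥 ⊕^ω V`.
-/

theorem LieHom.map_lie_apply {K h M : Type*} [CommRing K] [LieRing h] [LieAlgebra K h]
    [AddCommGroup M] [Module K M] (f : h →ₗ⁅K⁆ Module.End K M) (y₀ y₁ : h) (m : M) :
    f ⁅y₀, y₁⁆ m = f y₀ (f y₁ m) - f y₁ (f y₀ m) := by
  rw [LieHom.map_lie, Ring.lie_def]
  rfl

section Commutator

variable {K g h W V : Type*} [Field K] [LieRing g] [LieAlgebra K g] [LieRing h] [LieAlgebra K h]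
  [AddCommGroup W] [Module K W] [AddCommGroup V] [Module K V]
  {L : h →ₗ⁅K⁆ Module.End K g} {ρ01 : h →ₗ⁅K⁆ Module.End K W} {ρ00 : h →ₗ⁅K⁆ Module.End K V}
  {ρ1 : g →ₗ[K] V →ₗ[K] W}

theorem Leps_commutator
    (hact : ∀ (y : h) (x : g), ρ1 (L y x) = ρ01 y ∘ₗ ρ1 x - ρ1 x ∘ₗ ρ00 y)
    (α : h →ₗ[K] g →ₗ[K] W) (y₀ y₁ : h) (v₀ v₁ : V) (p : g × W) :
    Leps K g h W V L ρ01 ρ1 α y₀ v₀ (Leps K g h W V L ρ01 ρ1 α y₁ v₁ p) -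
        Leps K g h W V L ρ01 ρ1 α y₁ v₁ (Leps K g h W V L ρ01 ρ1 α y₀ v₀ p) =
      (L ⁅y₀, y₁⁆ p.1, ρ01 ⁅y₀, y₁⁆ p.2 - ρ1 p.1 (ρ00 y₀ v₁ - ρ00 y₁ v₀) -
        (ρ01 y₀ (α y₁ p.1) - α y₁ (L y₀ p.1) - (ρ01 y₁ (α y₀ p.1) - α y₀ (L y₁ p.1)))) := by
  have cross (y : h) (v : V) : ρ01 y (ρ1 p.1 v) - ρ1 (L y p.1) v = ρ1 p.1 (ρ00 y v) := by
    simp [hact]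
  simp only [Leps, Prod.mk_sub_mk, LieHom.map_lie_apply, map_sub, ← cross]
  congr 1
  abel

end Commutator

theorem Leps_is_action_general
    (K : Type*) [Field K]
    (g h W V : Type*) [LieRing g] [LieAlgebra K g] [LieRing h] [LieAlgebra K h]
    [AddCommGroup W] [Module K W] [AddCommGroup V] [Module K V]
    (L : h →ₗ⁅K⁆ Module.End K g)
    (ρ01 : h →ₗ⁅K⁆ Module.End K W) (ρ00 : h →ₗ⁅K⁆ Module.End K V)
    (ρ1 : g →ₗ[K] V →ₗ[K] W)
    (hact : ∀ (y : h) (x : g),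
      ρ1 (L y x) = ρ01 y ∘ₗ ρ1 x - ρ1 x ∘ₗ ρ00 y)
    (ω : h →ₗ[K] h →ₗ[K] V) (α : h →ₗ[K] g →ₗ[K] W)
    -- equation (v)
    (heq5 : ∀ (y₀ y₁ : h) (x : g),
      α ⁅y₀, y₁⁆ x - ρ1 x (ω y₀ y₁) =
        ρ01 y₀ (α y₁ x) - α y₁ (L y₀ x) -
          (ρ01 y₁ (α y₀ x) - α y₀ (L y₁ x))) :
    ∀ (y₀ y₁ : h) (v₀ v₁ : V) (p : g × W),
      Leps K g h W V L ρ01 ρ1 α ⁅y₀, y₁⁆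
          (ρ00 y₀ v₁ - ρ00 y₁ v₀ - ω y₀ y₁) p =
        Leps K g h W V L ρ01 ρ1 α y₀ v₀
            (Leps K g h W V L ρ01 ρ1 α y₁ v₁ p) -
          Leps K g h W V L ρ01 ρ1 α y₁ v₁
            (Leps K g h W V L ρ01 ρ1 α y₀ v₀ p) := by
  intro y₀ y₁ v₀ v₁ p
  rw [Leps_commutator hact, ← heq5]
  simp only [Leps, map_sub]
  congr 1
  abel

/-- Given equation (v), the map L^ε defines a Lie algebra action of 𝔥 ⊕^ω V
on 𝔤 ⊕^{ω₁} W. -/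
theorem Leps_is_action
    (K : Type*) [Field K]
    (g h W V : Type*) [LieRing g] [LieAlgebra K g] [LieRing h] [LieAlgebra K h]
    [AddCommGroup W] [Module K W] [AddCommGroup V] [Module K V]
    (φ : W →ₗ[K] V)
    (μ : g →ₗ⁅K⁆ h) (L : h →ₗ⁅K⁆ Module.End K g)
    (hder : ∀ (y : h) (x₁ x₂ : g), L y ⁅x₁, x₂⁆ = ⁅L y x₁, x₂⁆ + ⁅x₁, L y x₂⁆)
    (hequiv : ∀ (y : h) (x : g), μ (L y x) = ⁅y, μ x⁆)
    (hpeiffer : ∀ (x₀ x₁ : g), L (μ x₀) x₁ = ⁅x₀, x₁⁆)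
    (ρ01 : h →ₗ⁅K⁆ Module.End K W) (ρ00 : h →ₗ⁅K⁆ Module.End K V)
    (ρ1 : g →ₗ[K] V →ₗ[K] W)
    (hcompat : ∀ y : h, φ ∘ₗ ρ01 y = ρ00 y ∘ₗ φ)
    (h00μ : ∀ x : g, (ρ00 (μ x) : V →ₗ[K] V) = φ ∘ₗ ρ1 x)
    (h01μ : ∀ x : g, (ρ01 (μ x) : W →ₗ[K] W) = ρ1 x ∘ₗ φ)
    (hact : ∀ (y : h) (x : g),
      ρ1 (L y x) = ρ01 y ∘ₗ ρ1 x - ρ1 x ∘ₗ ρ00 y)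
    (ω : h →ₗ[K] h →ₗ[K] V) (α : h →ₗ[K] g →ₗ[K] W) (φt : g →ₗ[K] V)
    -- equation (v)
    (heq5 : ∀ (y₀ y₁ : h) (x : g),
      α ⁅y₀, y₁⁆ x - ρ1 x (ω y₀ y₁) =
        ρ01 y₀ (α y₁ x) - α y₁ (L y₀ x) -
          (ρ01 y₁ (α y₀ x) - α y₀ (L y₁ x))) :
    ∀ (y₀ y₁ : h) (v₀ v₁ : V) (p : g × W),
      Leps K g h W V L ρ01 ρ1 α ⁅y₀, y₁⁆
          (ρ00 y₀ v₁ - ρ00 y₁ v₀ - ω y₀ y₁) p =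
        Leps K g h W V L ρ01 ρ1 α y₀ v₀
            (Leps K g h W V L ρ01 ρ1 α y₁ v₁ p) -
          Leps K g h W V L ρ01 ρ1 α y₁ v₁
            (Leps K g h W V L ρ01 ρ1 α y₀ v₀ p) :=
  Leps_is_action_general K g h W V L ρ01 ρ00 ρ1 hact ω α heq5
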